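/- There exists an absolute constant c' > 0 with the following property. Let n ≥ 1, let A, A₁ be n×n real matrices, let P be a symmetric positive definite n×n matrix and Q a symmetric positive definite n×n matrix satisfying the Lyapunov equation (A + A₁)ᵀP + P(A + A₁) = −Q. If the hold length Δ > 0 satisfies Δ ≤ c' · σ_min(Q) / (σ_max(P) · (σ_max(A) + σ_max(A₁))²), then the sampled-data system determined by (A, A₁, Δ) is asymptotically stable: for every admissible sampling sequence and every solution x, x(t) → 0 as t → ∞. -/

import Mathlib

open Matrix Filter

/-- A matrix acting on Euclidean space (so that `‖·‖` is the Euclidean norm). -/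
noncomputable def mulVecE {n : ℕ} (M : Matrix (Fin n) (Fin n) ℝ)
    (x : EuclideanSpace ℝ (Fin n)) : EuclideanSpace ℝ (Fin n) :=
  WithLp.toLp 2 (M.mulVec x)

/-- The largest singular value of `M`, i.e. its ℓ²→ℓ² operator norm. -/
noncomputable def sigmaMax {n : ℕ} (M : Matrix (Fin n) (Fin n) ℝ) : ℝ :=
  ‖Matrix.toEuclideanCLM (𝕜 := ℝ) (n := Fin n) M‖

/-- The smallest eigenvalue of a symmetric matrix, via the Rayleigh quotient. -/
noncomputable def sigmaMin {n : ℕ} (Q : Matrix (Fin n) (Fin n) ℝ) : ℝ :=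
  sInf {r : ℝ | ∃ x : EuclideanSpace ℝ (Fin n), ‖x‖ = 1 ∧ inner (𝕜 := ℝ) x (mulVecE Q x) = r}

/-- An admissible sampling sequence for hold length `Δ`:
`t 0 = 0`, strictly increasing, steps at most `Δ`, tending to infinity. -/
def AdmissibleSampling (Δ : ℝ) (t : ℕ → ℝ) : Prop :=
  t 0 = 0 ∧ StrictMono t ∧ (∀ k, t (k + 1) - t k ≤ Δ) ∧
    Filter.Tendsto t Filter.atTop Filter.atTop

/-- A solution of the sampled-data system `ẋ(t) = A x(t) + A₁ x(t_k)` on `[0,∞)`. -/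
def IsSolution {n : ℕ} (A A₁ : Matrix (Fin n) (Fin n) ℝ) (t : ℕ → ℝ)
    (x : ℝ → EuclideanSpace ℝ (Fin n)) : Prop :=
  ContinuousOn x (Set.Ici 0) ∧
  ∀ k : ℕ, ∀ s ∈ Set.Icc (t k) (t (k + 1)),
    HasDerivWithinAt x (mulVecE A (x s) + mulVecE A₁ (x (t k)))
      (Set.Icc (t k) (t (k + 1))) s

/-! With `V v = ⟪v, P v⟫`, the Lyapunov equation gives `2 ⟪(A + A₁) v, P v⟫ ≤ -σ_min(Q) ‖v‖²`.
On a hold interval `[t_k, t_{k+1}]`, Grönwall's inequality keeps `‖x(s)‖` between `‖x(t_k)‖ / 2`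
and `2 ‖x(t_k)‖` and bounds the sampling error `‖x(s) - x(t_k)‖` by `O(L Δ ‖x(t_k)‖)`, where
`L = σ_max(A) + σ_max(A₁)`. For `Δ ≤ σ_min(Q) / (96 σ_max(P) L²)` (which forces `L Δ ≤ 1 / 48`,
as `σ_min(Q) ≤ 2 σ_max(P) L`) this error costs at most half of the decay of `V`, so
`V(x(t_{k+1})) ≤ V(x(t_k)) exp(-α (t_{k+1} - t_k))` with `α = σ_min(Q) / (8 σ_max(P))`.
As `σ_min(P) ‖v‖² ≤ V v`, the solution decays exponentially. -/

open Set Filter Topology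
open scoped RealInnerProductSpace

lemma le_mul_exp_of_forall_succ_le {u t : ℕ → ℝ} {α : ℝ}
    (h : ∀ k, u (k + 1) ≤ u k * Real.exp (-(α * (t (k + 1) - t k)))) (k : ℕ) :
    u k ≤ u 0 * Real.exp (-(α * (t k - t 0))) := by
  induction k with
  | zero => simp
  | succ k ih =>
    calc u (k + 1) ≤ u k * Real.exp (-(α * (t (k + 1) - t k))) := h k
      _ ≤ u 0 * Real.exp (-(α * (t k - t 0))) * Real.exp (-(α * (t (k + 1) - t k))) := by
          gcongr
      _ = u 0 * Real.exp (-(α * (t (k + 1) - t 0))) := by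
          rw [mul_assoc, ← Real.exp_add]; ring_nf

lemma exists_mem_Icc_of_tendsto_atTop {t : ℕ → ℝ} (ht : Tendsto t atTop atTop) {s : ℝ}
    (hs : t 0 ≤ s) : ∃ k, s ∈ Icc (t k) (t (k + 1)) := by
  classical
  have hex : ∃ m, s < t m := (ht.eventually_gt_atTop s).exists
  obtain ⟨k, hk⟩ := Nat.exists_eq_succ_of_ne_zero
    (fun h => (Nat.find_spec hex).not_ge (h ▸ hs) : Nat.find hex ≠ 0)
  refine ⟨k, not_lt.1 (Nat.find_min hex (by omega)), ?_⟩
  exact (hk ▸ Nat.find_spec hex).le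

lemma tendsto_nhds_zero_of_norm_sq_le_exp {F : Type*} [NormedAddCommGroup F] {f : ℝ → F}
    {C α : ℝ} (hα : 0 < α) (h : ∀ᶠ s in atTop, ‖f s‖ ^ 2 ≤ C * Real.exp (-(α * s))) :
    Tendsto f atTop (𝓝 0) := by
  have hexp : Tendsto (fun s => C * Real.exp (-(α * s))) atTop (𝓝 0) := by
    simpa using (Real.tendsto_exp_neg_atTop_nhds_zero.comp
      (tendsto_id.const_mul_atTop hα)).const_mul C
  have hsq : Tendsto (fun s => ‖f s‖ ^ 2) atTop (𝓝 0) :=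
    squeeze_zero' (.of_forall fun s => by positivity) h hexp
  rw [tendsto_zero_iff_norm_tendsto_zero]
  simpa [Real.sqrt_sq (norm_nonneg _)] using hsq.sqrt

section NormedSpace

variable {E : Type*} [NormedAddCommGroup E] [NormedSpace ℝ E] {A A₁ : E →L[ℝ] E} {x : ℝ → E}
  {a b L : ℝ}

def IsHoldSolution (A A₁ : E →L[ℝ] E) (a b : ℝ) (x : ℝ → E) : Prop :=
  ∀ s ∈ Icc a b, HasDerivWithinAt x (A (x s) + A₁ (x a)) (Icc a b) s

lemma norm_apply_add_apply_le (hL : ‖A‖ + ‖A₁‖ ≤ L) (y z : E) :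
    ‖A y + A₁ z‖ ≤ L * ‖y‖ + L * ‖z‖ :=
  calc ‖A y + A₁ z‖ ≤ ‖A‖ * ‖y‖ + ‖A₁‖ * ‖z‖ :=
        (norm_add_le _ _).trans (add_le_add (A.le_opNorm y) (A₁.le_opNorm z))
    _ ≤ L * ‖y‖ + L * ‖z‖ := by
        gcongr <;> linarith [norm_nonneg A, norm_nonneg A₁]

/-- Grönwall's inequality, with `exp (1 / 6) ≤ 3 / 2`. -/
lemma IsHoldSolution.norm_le (hx : IsHoldSolution A A₁ a b x) (hL : ‖A‖ + ‖A₁‖ ≤ L)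
    (hL0 : 0 < L) (hLh : L * (b - a) ≤ 1 / 6) : ∀ s ∈ Icc a b, ‖x s‖ ≤ 2 * ‖x a‖ := by
  have hgronwall := norm_le_gronwallBound_of_norm_deriv_right_le
    (fun s hs => (hx s hs).continuousWithinAt)
    (fun s hs => (hx s (Ico_subset_Icc_self hs)).mono_of_mem_nhdsWithin
      (Icc_mem_nhdsGE_of_mem hs))
    le_rfl (fun s _ => norm_apply_add_apply_le hL (x s) (x a))
  intro s hs
  have hexp : Real.exp (L * (s - a)) ≤ 3 / 2 := by
    have hLs : L * (s - a) ≤ 1 / 6 := le_trans (by nlinarith [hs.2]) hLh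
    calc Real.exp (L * (s - a)) ≤ 1 / (1 - L * (s - a)) :=
          Real.exp_bound_div_one_sub_of_interval (by nlinarith [hs.1]) (by linarith)
      _ ≤ 3 / 2 := by rw [div_le_iff₀ (by linarith)]; linarith
  have h := hgronwall s hs
  rw [gronwallBound_of_K_ne_0 hL0.ne', mul_div_cancel_left₀ _ hL0.ne'] at h
  nlinarith [norm_nonneg (x a)]

lemma IsHoldSolution.norm_sub_le (hx : IsHoldSolution A A₁ a b x) (hL : ‖A‖ + ‖A₁‖ ≤ L)
    (hL0 : 0 < L) (hLh : L * (b - a) ≤ 1 / 6) :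
    ∀ s ∈ Icc a b, ‖x s - x a‖ ≤ 3 * L * ‖x a‖ * (s - a) :=
  norm_image_sub_le_of_norm_deriv_le_segment' hx fun s hs => by
    have := hx.norm_le hL hL0 hLh s (Ico_subset_Icc_self hs)
    have := norm_apply_add_apply_le hL (x s) (x a)
    nlinarith

end NormedSpace

section InnerProductSpace

variable {E : Type*} [NormedAddCommGroup E] [InnerProductSpace ℝ E] {A A₁ P : E →L[ℝ] E}
  {x : ℝ → E} {t : ℕ → ℝ} {a b m q α Δ L : ℝ}

lemma HasDerivWithinAt.inner_apply_self (hP : (P : E →ₗ[ℝ] E).IsSymmetric) {x' : E}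
    {S : Set ℝ} {s : ℝ} (hx : HasDerivWithinAt x x' S s) :
    HasDerivWithinAt (fun r => ⟪x r, P (x r)⟫) (2 * ⟪x', P (x s)⟫) S s :=
  (hx.inner ℝ ((P.hasFDerivAt).comp_hasDerivWithinAt s hx)).congr_deriv <| by
    have h := hP (x s) x'
    rw [ContinuousLinearMap.coe_coe] at h
    rw [Function.comp_apply, ← h, real_inner_comm]; ring

/-- The sampling error `A₁ (x a - x s)` costs at most `q / 8 * ‖x a‖ ^ 2` of the decay rate
`q ‖x s‖ ^ 2 ≥ q / 4 * ‖x a‖ ^ 2` of the continuous closed loop. -/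
lemma IsHoldSolution.two_mul_inner_le (hx : IsHoldSolution A A₁ a b x)
    (hL : ‖A‖ + ‖A₁‖ ≤ L) (hL0 : 0 < L) (hLh : L * (b - a) ≤ 1 / 6)
    (hLyap : ∀ v, 2 * ⟪(A + A₁) v, P v⟫ ≤ -(q * ‖v‖ ^ 2))
    (hq : 96 * ‖P‖ * L ^ 2 * (b - a) ≤ q) :
    ∀ s ∈ Icc a b, 2 * ⟪A (x s) + A₁ (x a), P (x s)⟫ ≤ -(q / 8 * ‖x a‖ ^ 2) := by
  intro s hs
  set c := ‖x a‖
  set e := x s - x a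
  have hc : 0 ≤ c := norm_nonneg _
  have hh : 0 ≤ b - a := by linarith [hs.1, hs.2]
  have hq0 : 0 ≤ q := le_trans (by positivity) hq
  have he : ‖e‖ ≤ 3 * L * c * (b - a) :=
    (hx.norm_sub_le hL hL0 hLh s hs).trans (by gcongr; exact hs.2)
  have hup : ‖x s‖ ≤ 2 * c := hx.norm_le hL hL0 hLh s hs
  have hlow : c / 2 ≤ ‖x s‖ := by
    have := norm_le_norm_add_norm_sub (x s) (x a)
    nlinarith
  have hsplit : A (x s) + A₁ (x a) = (A + A₁) (x s) - A₁ e := by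
    rw [map_sub, _root_.add_apply]; abel
  have herr : -⟪A₁ e, P (x s)⟫ ≤ L * ‖e‖ * (‖P‖ * ‖x s‖) :=
    calc -⟪A₁ e, P (x s)⟫ ≤ ‖A₁ e‖ * ‖P (x s)‖ :=
          (neg_le_abs _).trans (abs_real_inner_le_norm _ _)
      _ ≤ L * ‖e‖ * (‖P‖ * ‖x s‖) := by
          gcongr
          exact (A₁.le_opNorm e).trans (by gcongr; linarith [norm_nonneg A])
          exact P.le_opNorm _
  have herr' : L * ‖e‖ * (‖P‖ * ‖x s‖) ≤ q / 16 * c ^ 2 :=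
    calc L * ‖e‖ * (‖P‖ * ‖x s‖) ≤ L * (3 * L * c * (b - a)) * (‖P‖ * (2 * c)) := by gcongr
      _ = 6 * ‖P‖ * L ^ 2 * (b - a) * c ^ 2 := by ring
      _ ≤ q / 16 * c ^ 2 := by gcongr; linarith
  have hmain : -(q * ‖x s‖ ^ 2) ≤ -(q / 4 * c ^ 2) := by
    have : c ^ 2 / 4 ≤ ‖x s‖ ^ 2 := by nlinarith
    nlinarith
  rw [hsplit, inner_sub_left]
  linarith [hLyap (x s)]

lemma IsHoldSolution.inner_apply_self_le (hx : IsHoldSolution A A₁ a b x) (hP : P.IsPositive)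
    (hL : ‖A‖ + ‖A₁‖ ≤ L) (hL0 : 0 < L) (hLh : L * (b - a) ≤ 1 / 6)
    (hLyap : ∀ v, 2 * ⟪(A + A₁) v, P v⟫ ≤ -(q * ‖v‖ ^ 2))
    (hq : 96 * ‖P‖ * L ^ 2 * (b - a) ≤ q) (hab : a ≤ b) (hα : 0 ≤ α) (hαP : α * ‖P‖ ≤ q / 8) :
    ⟪x b, P (x b)⟫ ≤ ⟪x a, P (x a)⟫ * Real.exp (-(α * (b - a))) := by
  set c := ‖x a‖
  have hderiv : ∀ s ∈ Icc a b, HasDerivWithinAt (fun r => ⟪x r, P (x r)⟫ + q / 8 * c ^ 2 * r)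
      (2 * ⟪A (x s) + A₁ (x a), P (x s)⟫ + q / 8 * c ^ 2) (Icc a b) s := fun s hs =>
    ((hx s hs).inner_apply_self hP.isSymmetric).add
      (((hasDerivWithinAt_id s _).const_mul _).congr_deriv (mul_one _))
  have hanti : AntitoneOn (fun r => ⟪x r, P (x r)⟫ + q / 8 * c ^ 2 * r) (Icc a b) := by
    refine antitoneOn_of_hasDerivWithinAt_nonpos (convex_Icc a b)
      (f' := fun s => 2 * ⟪A (x s) + A₁ (x a), P (x s)⟫ + q / 8 * c ^ 2)
      (fun s hs => (hderiv s hs).continuousWithinAt) (fun s hs => ?_) (fun s hs => ?_)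
    · rw [interior_Icc] at hs ⊢
      exact (hderiv s (Ioo_subset_Icc_self hs)).mono Ioo_subset_Icc_self
    · rw [interior_Icc] at hs
      linarith [hx.two_mul_inner_le hL hL0 hLh hLyap hq s (Ioo_subset_Icc_self hs)]
  have hdrop : ⟪x b, P (x b)⟫ ≤ ⟪x a, P (x a)⟫ - q / 8 * c ^ 2 * (b - a) := by
    have := hanti ⟨le_rfl, hab⟩ ⟨hab, le_rfl⟩ hab
    simp only at this
    linarith
  have hVa : ⟪x a, P (x a)⟫ ≤ ‖P‖ * c ^ 2 :=
    calc ⟪x a, P (x a)⟫ ≤ c * ‖P (x a)‖ := real_inner_le_norm _ _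
      _ ≤ c * (‖P‖ * c) := by gcongr; exact P.le_opNorm _
      _ = ‖P‖ * c ^ 2 := by ring
  have hrate : α * ⟪x a, P (x a)⟫ ≤ q / 8 * c ^ 2 :=
    calc α * ⟪x a, P (x a)⟫ ≤ α * (‖P‖ * c ^ 2) := by gcongr
      _ ≤ q / 8 * c ^ 2 := by rw [← mul_assoc]; gcongr
  calc ⟪x b, P (x b)⟫ ≤ ⟪x a, P (x a)⟫ * (1 - α * (b - a)) := by nlinarith
    _ ≤ ⟪x a, P (x a)⟫ * Real.exp (-(α * (b - a))) := by
        gcongr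
        · exact hP.inner_nonneg_right _
        · linarith [Real.add_one_le_exp (-(α * (b - a)))]

lemma le_two_mul_norm_mul_norm_of_lyapunov [Nontrivial E] {B : E →L[ℝ] E}
    (hLyap : ∀ v, 2 * ⟪B v, P v⟫ ≤ -(q * ‖v‖ ^ 2)) : q ≤ 2 * ‖P‖ * ‖B‖ := by
  obtain ⟨v, hv⟩ := exists_ne (0 : E)
  have hv' : 0 < ‖v‖ ^ 2 := by positivity
  have hinner : -⟪B v, P v⟫ ≤ ‖B‖ * ‖P‖ * ‖v‖ ^ 2 :=
    calc -⟪B v, P v⟫ ≤ ‖B v‖ * ‖P v‖ := (neg_le_abs _).trans (abs_real_inner_le_norm _ _)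
      _ ≤ ‖B‖ * ‖v‖ * (‖P‖ * ‖v‖) := by gcongr <;> exact ContinuousLinearMap.le_opNorm _ _
      _ = ‖B‖ * ‖P‖ * ‖v‖ ^ 2 := by ring
  have := hLyap v
  exact le_of_mul_le_mul_right (by nlinarith) hv'

theorem tendsto_zero_of_isHoldSolution (hP : P.IsPositive) (hm : 0 < m)
    (hPm : ∀ v, m * ‖v‖ ^ 2 ≤ ⟪v, P v⟫) (hLyap : ∀ v, 2 * ⟪(A + A₁) v, P v⟫ ≤ -(q * ‖v‖ ^ 2))
    (hL : ‖A‖ + ‖A₁‖ ≤ L) (hL0 : 0 < L) (hLΔ : L * Δ ≤ 1 / 6) (hq : 96 * ‖P‖ * L ^ 2 * Δ ≤ q)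
    (hα : 0 < α) (hαP : α * ‖P‖ ≤ q / 8) (ht : AdmissibleSampling Δ t)
    (hx : ∀ k, IsHoldSolution A A₁ (t k) (t (k + 1)) x) :
    Tendsto x atTop (𝓝 0) := by
  obtain ⟨ht0, htmono, htΔ, httop⟩ := ht
  have hLstep (k : ℕ) : L * (t (k + 1) - t k) ≤ 1 / 6 :=
    le_trans (by gcongr; exact htΔ k) hLΔ
  have hqstep (k : ℕ) : 96 * ‖P‖ * L ^ 2 * (t (k + 1) - t k) ≤ q :=
    le_trans (by gcongr; exact htΔ k) hq
  have hdecay (k : ℕ) : ⟪x (t k), P (x (t k))⟫ ≤ ⟪x 0, P (x 0)⟫ * Real.exp (-(α * t k)) := by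
    simpa [ht0] using le_mul_exp_of_forall_succ_le (u := fun k => ⟪x (t k), P (x (t k))⟫)
      (fun k => (hx k).inner_apply_self_le hP hL hL0 (hLstep k) hLyap (hqstep k)
        (htmono k.lt_succ_self).le hα.le hαP) k
  refine tendsto_nhds_zero_of_norm_sq_le_exp hα
    (C := 4 * ⟪x 0, P (x 0)⟫ * Real.exp (α * Δ) / m) ?_
  filter_upwards [eventually_ge_atTop 0] with s hs
  obtain ⟨k, hk⟩ := exists_mem_Icc_of_tendsto_atTop httop (ht0 ▸ hs)
  have hgrowth : ‖x s‖ ≤ 2 * ‖x (t k)‖ := (hx k).norm_le hL hL0 (hLstep k) s hk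
  have hsample : m * ‖x (t k)‖ ^ 2 ≤ ⟪x 0, P (x 0)⟫ * Real.exp (-(α * t k)) :=
    (hPm _).trans (hdecay k)
  have hdelay : Real.exp (-(α * t k)) ≤ Real.exp (α * Δ) * Real.exp (-(α * s)) := by
    rw [← Real.exp_add]
    gcongr
    nlinarith [htΔ k, hk.2]
  have hV0 : 0 ≤ ⟪x 0, P (x 0)⟫ := hP.inner_nonneg_right _
  have hsq : ‖x s‖ ^ 2 ≤ 4 * ‖x (t k)‖ ^ 2 := by nlinarith [norm_nonneg (x s)]
  rw [div_mul_eq_mul_div, le_div_iff₀ hm]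
  calc ‖x s‖ ^ 2 * m ≤ 4 * (m * ‖x (t k)‖ ^ 2) := by nlinarith
    _ ≤ 4 * (⟪x 0, P (x 0)⟫ * (Real.exp (α * Δ) * Real.exp (-(α * s)))) :=
        mul_le_mul_of_nonneg_left (hsample.trans (mul_le_mul_of_nonneg_left hdelay hV0))
          (by norm_num)
    _ = _ := by ring

end InnerProductSpace

section Matrices

lemma Matrix.PosSemidef.isPositive_toEuclideanCLM {ι : Type*} [Fintype ι]
    [DecidableEq ι] {M : Matrix ι ι ℝ} (hM : M.PosSemidef) :
    (toEuclideanCLM (n := ι) (𝕜 := ℝ) M).IsPositive := by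
  rw [← ContinuousLinearMap.isPositive_toLinearMap_iff, coe_toEuclideanCLM_eq_toEuclideanLin,
    isPositive_toEuclideanLin_iff]
  exact hM

lemma two_mul_inner_toEuclideanCLM_of_lyapunov {ι : Type*} [Fintype ι] [DecidableEq ι]
    {B P Q : Matrix ι ι ℝ} (hP : P.IsHermitian) (h : Bᵀ * P + P * B = -Q)
    (v : EuclideanSpace ℝ ι) :
    2 * ⟪toEuclideanCLM (𝕜 := ℝ) B v, toEuclideanCLM (𝕜 := ℝ) P v⟫ =
      -⟪v, toEuclideanCLM (𝕜 := ℝ) Q v⟫ := by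
  have hsymm : ⟪v, toEuclideanCLM (𝕜 := ℝ) P (toEuclideanCLM (𝕜 := ℝ) B v)⟫ =
      ⟪toEuclideanCLM (𝕜 := ℝ) B v, toEuclideanCLM (𝕜 := ℝ) P v⟫ := by
    rw [real_inner_comm]
    exact isSymmetric_toEuclideanLin_iff.mpr hP _ _
  have h' := congrArg (fun M => ⟪v, toEuclideanCLM (𝕜 := ℝ) M v⟫) h
  simp only [← conjTranspose_eq_transpose_of_trivial, ← star_eq_conjTranspose, map_add,
    map_mul, map_neg, map_star, ContinuousLinearMap.star_eq_adjoint] at h'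
  rw [_root_.add_apply, mul_apply_eq_comp, mul_apply_eq_comp, inner_add_right,
    ContinuousLinearMap.adjoint_inner_right, hsymm, _root_.neg_apply, inner_neg_right] at h'
  linarith

variable {n : ℕ}

lemma mulVecE_eq_toEuclideanCLM (M : Matrix (Fin n) (Fin n) ℝ) :
    mulVecE M = toEuclideanCLM (𝕜 := ℝ) M :=
  rfl

lemma sigmaMin_mul_norm_sq_le (Q : Matrix (Fin n) (Fin n) ℝ) (v : EuclideanSpace ℝ (Fin n)) :
    sigmaMin Q * ‖v‖ ^ 2 ≤ ⟪v, toEuclideanCLM (𝕜 := ℝ) Q v⟫ := by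
  rcases eq_or_ne v 0 with rfl | hv
  · simp
  set Q' := toEuclideanCLM (𝕜 := ℝ) Q
  have hbdd : BddBelow {r | ∃ y : EuclideanSpace ℝ (Fin n), ‖y‖ = 1 ∧ ⟪y, Q' y⟫ = r} := by
    refine ⟨-‖Q'‖, ?_⟩
    rintro r ⟨y, hy, rfl⟩
    have := (abs_real_inner_le_norm y (Q' y)).trans
      (mul_le_mul_of_nonneg_left (Q'.le_opNorm y) (norm_nonneg _))
    rw [hy] at this
    linarith [neg_abs_le ⟪y, Q' y⟫]
  have hu : sigmaMin Q ≤ ⟪‖v‖⁻¹ • v, Q' (‖v‖⁻¹ • v)⟫ :=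
    csInf_le hbdd ⟨_, norm_smul_inv_norm hv, rfl⟩
  rw [map_smul, real_inner_smul_left, real_inner_smul_right] at hu
  have hv' : 0 < ‖v‖ := norm_pos_iff.2 hv
  calc sigmaMin Q * ‖v‖ ^ 2 ≤ ‖v‖⁻¹ * (‖v‖⁻¹ * ⟪v, Q' v⟫) * ‖v‖ ^ 2 := by gcongr
    _ = ⟪v, Q' v⟫ := by field_simp

lemma sigmaMin_pos [NeZero n] {Q : Matrix (Fin n) (Fin n) ℝ} (hQ : Q.PosDef) :
    0 < sigmaMin Q := by
  let f := fun v : EuclideanSpace ℝ (Fin n) => ⟪v, mulVecE Q v⟫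
  have hf : Continuous f := continuous_id.inner (toEuclideanCLM (𝕜 := ℝ) Q).continuous
  have hset : sigmaMin Q = sInf (f '' Metric.sphere 0 1) := by
    simp only [sigmaMin, Set.image, mem_sphere_zero_iff_norm, f]
  obtain ⟨v, hv, hmin⟩ : sigmaMin Q ∈ f '' Metric.sphere 0 1 :=
    hset ▸ ((isCompact_sphere 0 1).image hf).sInf_mem
      ((NormedSpace.sphere_nonempty.2 zero_le_one).image f)
  rw [← hmin]
  simpa [f, mulVecE_eq_toEuclideanCLM, inner_toEuclideanCLM] using
    hQ.dotProduct_mulVec_pos (x := WithLp.ofLp v)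
      (by simpa using ne_zero_of_mem_unit_sphere ⟨v, hv⟩)

end Matrices

/-- a sufficient hold-length condition for asymptotic stability of the
sampled-data system, from a Lyapunov equation for the continuous closed loop. -/
theorem sampled_data_stable_of_small_hold :
    ∃ c' : ℝ, 0 < c' ∧
      ∀ (n : ℕ), 1 ≤ n →
        ∀ A A₁ P Q : Matrix (Fin n) (Fin n) ℝ,
          P.PosDef → Q.PosDef →
          (A + A₁)ᵀ * P + P * (A + A₁) = -Q →
          ∀ Δ : ℝ, 0 < Δ →
            Δ ≤ c' * sigmaMin Q / (sigmaMax P * (sigmaMax A + sigmaMax A₁) ^ 2) →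
            ∀ t : ℕ → ℝ, AdmissibleSampling Δ t →
              ∀ x : ℝ → EuclideanSpace ℝ (Fin n), IsSolution A A₁ t x →
                Filter.Tendsto x Filter.atTop (nhds 0) := by
  refine ⟨1 / 96, by norm_num, fun n hn A A₁ P Q hP hQ hLyap Δ hΔ hΔle t ht x hx => ?_⟩
  have : NeZero n := ⟨by omega⟩
  set p := sigmaMax P
  set L := sigmaMax A + sigmaMax A₁
  set q := sigmaMin Q
  have hp0 : 0 ≤ p := norm_nonneg _
  have hL0 : 0 ≤ L := add_nonneg (norm_nonneg _) (norm_nonneg _)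
  -- `x / 0 = 0`, so `0 < Δ` rules out `p * L ^ 2 = 0`.
  have hpL : 0 < p * L ^ 2 := lt_of_le_of_ne (by positivity) fun h => by
    rw [← h, div_zero] at hΔle; linarith
  have hp : 0 < p := lt_of_le_of_ne hp0 fun h => by simp [← h] at hpL
  have hL : 0 < L := lt_of_le_of_ne hL0 fun h => by simp [← h] at hpL
  have hq : 96 * p * L ^ 2 * Δ ≤ q := by rw [le_div_iff₀ hpL] at hΔle; linarith
  have hLyap' (v : EuclideanSpace ℝ (Fin n)) :
      2 * ⟪(toEuclideanCLM (𝕜 := ℝ) A + toEuclideanCLM (𝕜 := ℝ) A₁) v,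
        toEuclideanCLM (𝕜 := ℝ) P v⟫ ≤ -(q * ‖v‖ ^ 2) := by
    rw [← map_add, two_mul_inner_toEuclideanCLM_of_lyapunov hP.isHermitian hLyap]
    linarith [sigmaMin_mul_norm_sq_le Q v]
  have hqL : q ≤ 2 * p * L :=
    (le_two_mul_norm_mul_norm_of_lyapunov hLyap').trans
      (mul_le_mul_of_nonneg_left (norm_add_le _ _) (by positivity))
  have hLΔ : L * Δ ≤ 1 / 6 := by nlinarith [mul_pos hp hL]
  exact tendsto_zero_of_isHoldSolution hP.posSemidef.isPositive_toEuclideanCLM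
    (sigmaMin_pos hP) (sigmaMin_mul_norm_sq_le P) hLyap' le_rfl hL hLΔ hq
    (α := q / (8 * p)) (div_pos (sigmaMin_pos hQ) (by positivity)) (by field_simp; rfl)
    ht hx.2
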